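/- Let g : (0,∞) → ℝ and h : (0,∞) → ℝ be monotone increasing functions such that g(r) < h(r) for all r outside an exceptional set E ⊂ [1,∞) of finite logarithmic measure. Then for any α > 1 there exists r_0 > 0 such that g(r) < h(αr) for all r > r_0. -/

import Mathlib

open Filter MeasureTheory ENNReal

/-- log⁺ x = max(0, log x). -/
noncomputable def logPlus (x : ℝ) : ℝ := max 0 (Real.log x)

/-- Maximum modulus M(r,f) of f over the circle |z| = r. -/
noncomputable def maxModulus (f : ℂ → ℂ) (r : ℝ) : ℝ :=
  sSup ((fun z => ‖f z‖) '' Metric.sphere (0 : ℂ) r)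

/-- Minimum modulus m(r,f) of f over the circle |z| = r. -/
noncomputable def minModulus (f : ℂ → ℂ) (r : ℝ) : ℝ :=
  sInf ((fun z => ‖f z‖) '' Metric.sphere (0 : ℂ) r)

/-- Order of growth ρ(f) = limsup_{r→∞} log⁺ log⁺ M(r,f) / log r, as extended real. -/
noncomputable def growthOrder (f : ℂ → ℂ) : EReal :=
  Filter.limsup (fun r : ℝ =>
    ((logPlus (logPlus (maxModulus f r)) / Real.log r : ℝ) : EReal)) Filter.atTop

open Classical in
/-- Multiplicity of z as a zero of f. -/
noncomputable def zeroMult (f : ℂ → ℂ) (z : ℂ) : ℕ :=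
  if h : AnalyticAt ℂ f z then (analyticOrderAt f z).toNat else 0

/-- n(r, 1/f): number of zeros of f in |z| ≤ r counted with multiplicity. -/
noncomputable def zeroCount (f : ℂ → ℂ) (r : ℝ) : ℝ :=
  ∑ᶠ z ∈ Metric.closedBall (0 : ℂ) r, (zeroMult f z : ℝ)

/-- Exponent of convergence of zeros λ(f) = limsup_{r→∞} log⁺ n(r,1/f) / log r. -/
noncomputable def zeroExponent (f : ℂ → ℂ) : EReal :=
  Filter.limsup (fun r : ℝ =>
    ((logPlus (zeroCount f r) / Real.log r : ℝ) : EReal)) Filter.atTop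

/-- An entire function is transcendental if it is not a polynomial. -/
def TranscendentalEntire (f : ℂ → ℂ) : Prop :=
  ¬ ∃ p : Polynomial ℂ, ∀ z, f z = p.eval z

/-- g has Fabry gaps: the strictly increasing enumeration (λ_k) of the indices of its
nonzero Taylor coefficients at 0 satisfies λ_k / k → ∞. -/
def HasFabryGaps (g : ℂ → ℂ) : Prop :=
  ∃ lam : ℕ → ℕ, StrictMono lam ∧
    (∀ k : ℕ, iteratedDeriv k g 0 ≠ 0 ↔ k ∈ Set.range lam) ∧
    Filter.Tendsto (fun k : ℕ => (lam k : ℝ) / (k : ℝ)) Filter.atTop Filter.atTop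

/-- Logarithmic measure of a set E ⊆ [1,∞): ∫_E dt/t. -/
noncomputable def logMeasure (E : Set ℝ) : ENNReal :=
  ∫⁻ t in E, ENNReal.ofReal (1 / t)

/-- Upper logarithmic density of a set F. -/
noncomputable def upperLogDensity (F : Set ℝ) : ℝ :=
  Filter.limsup (fun r : ℝ => (∫ t in F ∩ Set.Icc 1 r, 1 / t) / Real.log r) Filter.atTop

/-- δ(P,θ) = Re(a_n e^{inθ}) where a_n is the leading coefficient of P. -/
noncomputable def deltaFn (P : Polynomial ℂ) (θ : ℝ) : ℝ :=
  (P.leadingCoeff * Complex.exp (Complex.I * (P.natDegree : ℂ) * (θ : ℂ))).re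

theorem stmt15 (g h : ℝ → ℝ) (E : Set ℝ)
    (hg : MonotoneOn g (Set.Ioi (0 : ℝ)))
    (hh : MonotoneOn h (Set.Ioi (0 : ℝ)))
    (hE : E ⊆ Set.Ici (1 : ℝ)) (hEfin : logMeasure E < ⊤)
    (hlt : ∀ r > (0 : ℝ), r ∉ E → g r < h r) :
    ∀ α > (1 : ℝ), ∃ r₀ > (0 : ℝ), ∀ r > r₀, g r < h (α * r) := by
  intro α hα
  have hα0 : (0:ℝ) < α := lt_trans one_pos hα
  set f : ℝ → ℝ≥0∞ := fun t => ENNReal.ofReal (1/t) with hf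
  have hfm : Measurable f := (measurable_const.div measurable_id).ennreal_ofReal
  set μ := MeasureTheory.volume.restrict E with hμ
  set c : ℝ≥0∞ := ENNReal.ofReal (Real.log α) with hc
  have hcpos : 0 < c := ENNReal.ofReal_pos.mpr (Real.log_pos hα)
  have htot : ∫⁻ t, f t ∂μ < ⊤ := hEfin
  have htail : ∃ n : ℕ, ∫⁻ t in Set.Ioi (n:ℝ), f t ∂μ < c := by
    by_contra hcon
    push_neg at hcon
    have hsup : ⨆ n : ℕ, ∫⁻ t in Set.Iic (n:ℝ), f t ∂μ = ∫⁻ t, f t ∂μ := by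
      have h1 : ∀ n : ℕ, ∫⁻ t, (Set.Iic (n:ℝ)).indicator f t ∂μ
          = ∫⁻ t in Set.Iic (n:ℝ), f t ∂μ := fun n =>
        lintegral_indicator measurableSet_Iic f
      have h2 : ∫⁻ t, ⨆ n : ℕ, (Set.Iic (n:ℝ)).indicator f t ∂μ
          = ⨆ n : ℕ, ∫⁻ t, (Set.Iic (n:ℝ)).indicator f t ∂μ := by
        apply lintegral_iSup
        · exact fun n => hfm.indicator measurableSet_Iic
        · intro m n hmn
          intro t
          exact Set.indicator_le_indicator_of_subset
            (Set.Iic_subset_Iic.mpr (Nat.cast_le.mpr hmn)) (fun _ => zero_le) t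
      have h3 : ∀ t : ℝ, (⨆ n : ℕ, (Set.Iic (n:ℝ)).indicator f t) = f t := by
        intro t
        apply le_antisymm
        · exact iSup_le fun n => Set.indicator_le_self _ _ t
        · obtain ⟨n, hn⟩ := exists_nat_ge t
          exact le_iSup_of_le n (le_of_eq (Set.indicator_of_mem (Set.mem_Iic.mpr hn) f).symm)
      calc ⨆ n : ℕ, ∫⁻ t in Set.Iic (n:ℝ), f t ∂μ
          = ⨆ n : ℕ, ∫⁻ t, (Set.Iic (n:ℝ)).indicator f t ∂μ := by
            exact (iSup_congr h1).symm
        _ = ∫⁻ t, ⨆ n : ℕ, (Set.Iic (n:ℝ)).indicator f t ∂μ := h2.symm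
        _ = ∫⁻ t, f t ∂μ := by simp_rw [h3]
    have hsplit : ∀ n : ℕ, ∫⁻ t in Set.Iic (n:ℝ), f t ∂μ
        + ∫⁻ t in Set.Ioi (n:ℝ), f t ∂μ = ∫⁻ t, f t ∂μ := by
      intro n
      have := lintegral_add_compl f (measurableSet_Iic (a := (n:ℝ))) (μ := μ)
      rwa [Set.compl_Iic] at this
    have hle : ∀ n : ℕ, ∫⁻ t in Set.Iic (n:ℝ), f t ∂μ ≤ ∫⁻ t, f t ∂μ - c := by
      intro n
      apply ENNReal.le_sub_of_add_le_right ENNReal.ofReal_ne_top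
      calc ∫⁻ t in Set.Iic (n:ℝ), f t ∂μ + c
          ≤ ∫⁻ t in Set.Iic (n:ℝ), f t ∂μ + ∫⁻ t in Set.Ioi (n:ℝ), f t ∂μ :=
            add_le_add le_rfl (hcon n)
        _ = ∫⁻ t, f t ∂μ := hsplit n
    have htne : ∫⁻ t, f t ∂μ ≠ 0 := by
      intro h0
      have : c ≤ ∫⁻ t, f t ∂μ := le_trans (hcon 0) (by
        rw [← hsplit 0]; exact le_add_self)
      rw [h0] at this
      exact hcpos.ne' (le_antisymm this zero_le)
    have : ∫⁻ t, f t ∂μ ≤ ∫⁻ t, f t ∂μ - c := by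
      have h4 := iSup_le hle
      rwa [hsup] at h4
    exact absurd this (not_le.mpr (ENNReal.sub_lt_self htot.ne htne hcpos.ne'))
  obtain ⟨n, hn⟩ := htail
  refine ⟨max (n:ℝ) 1, lt_of_lt_of_le one_pos (le_max_right _ _), ?_⟩
  intro r hr
  have hr1 : (1:ℝ) < r := lt_of_le_of_lt (le_max_right _ _) hr
  have hrn : (n:ℝ) < r := lt_of_le_of_lt (le_max_left _ _) hr
  have hr0 : (0:ℝ) < r := lt_trans one_pos hr1
  have hrar : r ≤ α * r := le_mul_of_one_le_left hr0.le hα.le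
  have hex : ∃ s ∈ Set.Ioc r (α*r), s ∉ E := by
    by_contra hcon
    push_neg at hcon
    have hsub : Set.Ioc r (α*r) ⊆ Set.Ioi (n:ℝ) ∩ E :=
      fun s hs => ⟨lt_trans hrn hs.1, hcon s hs⟩
    have hle : ∫⁻ t in Set.Ioc r (α*r), f t ∂MeasureTheory.volume
        ≤ ∫⁻ t in Set.Ioi (n:ℝ), f t ∂μ := by
      rw [hμ, MeasureTheory.Measure.restrict_restrict measurableSet_Ioi]
      exact lintegral_mono' (MeasureTheory.Measure.restrict_mono hsub le_rfl) le_rfl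
    have hcont : ContinuousOn (fun t : ℝ => 1/t) (Set.Icc r (α*r)) := by
      apply ContinuousOn.div continuousOn_const continuousOn_id
      intro x hx
      exact ne_of_gt (lt_of_lt_of_le hr0 hx.1)
    have hint : MeasureTheory.IntegrableOn (fun t : ℝ => 1/t) (Set.Ioc r (α*r)) :=
      (hcont.integrableOn_Icc).mono_set Set.Ioc_subset_Icc_self
    have hnn : 0 ≤ᵐ[MeasureTheory.volume.restrict (Set.Ioc r (α*r))] fun t : ℝ => 1/t := by
      apply MeasureTheory.ae_restrict_of_forall_mem measurableSet_Ioc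
      intro t ht
      exact le_of_lt (div_pos one_pos (lt_trans hr0 ht.1))
    have hval : ∫ t in Set.Ioc r (α*r), (1/t) ∂MeasureTheory.volume = Real.log α := by
      rw [← intervalIntegral.integral_of_le hrar]
      rw [integral_one_div (by
        intro h0
        rw [Set.uIcc_of_le hrar] at h0
        exact absurd h0.1 (not_le.mpr hr0))]
      rw [mul_div_assoc, div_self hr0.ne', mul_one]
    have heq : ∫⁻ t in Set.Ioc r (α*r), f t ∂MeasureTheory.volume = c := by
      rw [hc, ← hval, MeasureTheory.ofReal_integral_eq_lintegral_ofReal hint hnn]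
    exact absurd (heq ▸ hle) (not_le.mpr hn)
  obtain ⟨s, hs, hsE⟩ := hex
  have hs0 : (0:ℝ) < s := lt_trans hr0 hs.1
  have har0 : (0:ℝ) < α * r := mul_pos hα0 hr0
  calc g r ≤ g s := hg (Set.mem_Ioi.mpr hr0) (Set.mem_Ioi.mpr hs0) hs.1.le
    _ < h s := hlt s hs0 hsE
    _ ≤ h (α * r) := hh (Set.mem_Ioi.mpr hs0) (Set.mem_Ioi.mpr har0) hs.2
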